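/- Let n ≥ 1 and suppose f : ℝⁿ → [0, ∞] is a function such that ∫_B f dH̃^n_∞ < ∞ for every open ball B in ℝⁿ. Then f is Lebesgue measurable if and only if f(x) = limsup_{r→0⁺} (1/H̃^n_∞(B(x,r))) ∫_{B(x,r)} f(y) dH̃^n_∞(y) for H̃^n_∞-almost every x ∈ ℝⁿ. -/

import Mathlib

open MeasureTheory Set Metric Filter Topology
open scoped ENNReal

noncomputable section

/-- Euclidean space `ℝⁿ`. -/
abbrev En (n : ℕ) : Type := EuclideanSpace ℝ (Fin n)

/-- The half-open dyadic cube `2^k (m + [0,1)ⁿ)`, `k : ℤ`, `m : ℤⁿ`. -/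
def dyadicCube (n : ℕ) (k : ℤ) (m : Fin n → ℤ) : Set (En n) :=
  {x | ∀ i, (m i : ℝ) * 2 ^ k ≤ x i ∧ x i < ((m i : ℝ) + 1) * 2 ^ k}

/-- The `δ`-dimensional dyadic Hausdorff content `H̃^δ_∞`: the infimum of `Σ ℓ(Q_i)^δ`
over all countable collections of dyadic cubes whose union's interior covers `E`. -/
def dyadicContent (n : ℕ) (δ : ℝ) (E : Set (En n)) : ℝ≥0∞ :=
  ⨅ (c : ℕ → ℤ × (Fin n → ℤ))
    (_ : E ⊆ interior (⋃ i, dyadicCube n (c i).1 (c i).2)),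
    ∑' i, ENNReal.ofReal (((2 : ℝ) ^ (c i).1) ^ δ)

/-- The Choquet integral `∫_Ω f dH̃^δ_∞ := ∫_0^∞ H̃^δ_∞({x ∈ Ω : f x > t}) dt`
of a `[0,∞]`-valued function over `Ω ⊆ ℝⁿ`. -/
def choquetIntegral (n : ℕ) (δ : ℝ) (Ω : Set (En n)) (f : En n → ℝ≥0∞) : ℝ≥0∞ :=
  ∫⁻ t in Ioi (0 : ℝ), dyadicContent n δ {x | x ∈ Ω ∧ ENNReal.ofReal t < f x}

/-- The Choquet integral `∫_Ω |f| dH̃^δ_∞` of a real-valued function. -/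
def choquetIntegralAbs (n : ℕ) (δ : ℝ) (Ω : Set (En n)) (f : En n → ℝ) : ℝ≥0∞ :=
  choquetIntegral n δ Ω (fun x => ENNReal.ofReal |f x|)

/-- The Choquet integral `∫_Ω |f| dH̃^δ_∞` of an extended-real-valued function. -/
def choquetIntegralEAbs (n : ℕ) (δ : ℝ) (Ω : Set (En n)) (f : En n → EReal) : ℝ≥0∞ :=
  choquetIntegral n δ Ω (fun x => (f x).abs)

/-- The ball average `f^δ_{B(x,r)} := (1/H̃^δ_∞(B(x,r))) ∫_{B(x,r)} f dH̃^δ_∞`. -/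
def ballAvg (n : ℕ) (δ : ℝ) (f : En n → ℝ≥0∞) (x : En n) (r : ℝ) : ℝ≥0∞ :=
  choquetIntegral n δ (ball x r) f / dyadicContent n δ (ball x r)

/-- The Hausdorff-content centred maximal function `M^δ f(x)`. -/
def maximal (n : ℕ) (δ : ℝ) (f : En n → ℝ≥0∞) (x : En n) : ℝ≥0∞ :=
  ⨆ (r : ℝ) (_ : 0 < r), ballAvg n δ f x r

/-- `f^δ_*(x) := limsup_{r→0⁺} (1/H̃^δ_∞(B(x,r))) ∫_{B(x,r)} |f(y) − f(x)| dH̃^δ_∞(y)`. -/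
def lebDev (n : ℕ) (δ : ℝ) (f : En n → ℝ) (x : En n) : ℝ≥0∞ :=
  limsup (fun r : ℝ => choquetIntegralAbs n δ (ball x r) (fun y => f y - f x) /
    dyadicContent n δ (ball x r)) (𝓝[>] (0 : ℝ))

/-- `limsup_{r→0⁺} f^δ_{B(x,r)}` of the ball averages. -/
def limsupAvg (n : ℕ) (δ : ℝ) (f : En n → ℝ≥0∞) (x : En n) : ℝ≥0∞ :=
  limsup (fun r : ℝ => ballAvg n δ f x r) (𝓝[>] (0 : ℝ))

/-!
For `n ≥ 1` the dyadic content `H̃ⁿ_∞` coincides with Lebesgue outer measure: an open set is the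
disjoint union of its maximal dyadic cubes, and padding that family with tiny cubes costs
arbitrarily little. Choquet integrals are then layer-cake integrals. Every `f` has a measurable
envelope `g` whose superlevel sets are measurable hulls of those of `f`, so `f` and `g` have the
same Choquet integral over every ball, and by Lebesgue's differentiation theorem the ball averages
of `f` tend to `g` almost everywhere. Hence `f` agrees a.e. with the limsup of its averages iff
`f = g` a.e., which is Lebesgue measurability (for measurable `f` one may take `g = f`).
-/

lemma volume_ofReal_lt_inter_Ioi (a : ℝ≥0∞) :
    volume ({t | ENNReal.ofReal t < a} ∩ Ioi (0 : ℝ)) = a := by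
  rcases eq_or_ne a ∞ with rfl | ha
  · simp
  · have : {t | ENNReal.ofReal t < a} ∩ Ioi (0 : ℝ) = Ioo 0 a.toReal := by
      ext t
      simp only [mem_inter_iff, mem_Ioi, mem_ofPred_eq, mem_Ioo]
      exact ⟨fun ⟨h, ht⟩ => ⟨ht, (ENNReal.ofReal_lt_iff_lt_toReal ht.le ha).1 h⟩,
        fun ⟨ht, h⟩ => ⟨(ENNReal.ofReal_lt_iff_lt_toReal ht.le ha).2 h, ht⟩⟩
    rw [this, Real.volume_Ioo, sub_zero, ENNReal.ofReal_toReal ha]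

theorem lintegral_eq_lintegral_measure_ofReal_lt {α : Type*} [MeasurableSpace α] (μ : Measure α)
    [SFinite μ] {g : α → ℝ≥0∞} (hg : Measurable g) :
    ∫⁻ x, g x ∂μ = ∫⁻ t in Ioi 0, μ {x | ENNReal.ofReal t < g x} := by
  have hA : MeasurableSet {p : α × ℝ | ENNReal.ofReal p.2 < g p.1} :=
    measurableSet_lt (ENNReal.measurable_ofReal.comp measurable_snd) (hg.comp measurable_fst)
  have h := (Measure.prod_apply hA).symm.trans (Measure.prod_apply_symm (μ := μ)
    (ν := volume.restrict (Ioi (0 : ℝ))) hA)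
  simpa only [preimage_ofPred_eq, Measure.restrict_apply' measurableSet_Ioi,
    volume_ofReal_lt_inter_Ioi] using h

lemma measure_superlevel_inter_congr {α : Type*} [MeasurableSpace α] {μ : Measure α}
    {f g : α → ℝ≥0∞} (hfg : f =ᵐ[μ] g) (t : ℝ≥0∞) (S : Set α) :
    μ ({x | t < f x} ∩ S) = μ ({x | t < g x} ∩ S) :=
  measure_congr <| (eventuallyEq_set.2 <| hfg.mono fun x hx => by simp [hx]).inter
    EventuallyEq.rfl

section Envelope

variable {α : Type*} [MeasurableSpace α] (μ : Measure α) (f : α → ℝ≥0∞)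

/-- Intersecting over `p ≤ q` makes the hulls antitone in `q`, which `toMeasurable` alone does not
guarantee. -/
def superlevelHull (q : ℚ) : Set α :=
  ⋂ (p : ℚ) (_ : p ≤ q), toMeasurable μ {x | ENNReal.ofReal p < f x}

def measurableEnvelope (x : α) : ℝ≥0∞ :=
  ⨆ q : ℚ, (superlevelHull μ f q).indicator (fun _ => ENNReal.ofReal q) x

variable {μ f}

lemma measurableSet_superlevelHull (q : ℚ) : MeasurableSet (superlevelHull μ f q) :=
  .iInter fun _ => .iInter fun _ => measurableSet_toMeasurable _ _

lemma antitone_superlevelHull : Antitone (superlevelHull μ f) := fun _ _ h =>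
  iInter₂_mono' fun p hp => ⟨p, hp.trans h, Subset.rfl⟩

lemma measurable_measurableEnvelope : Measurable (measurableEnvelope μ f) :=
  .iSup fun q => measurable_const.indicator (measurableSet_superlevelHull q)

lemma superlevel_subset_measurableEnvelope (t : ℝ≥0∞) :
    {x | t < f x} ⊆ {x | t < measurableEnvelope μ f x} := by
  intro x (hx : t < f x)
  obtain ⟨q, -, htq, hqf⟩ := ENNReal.lt_iff_exists_rat_btwn.1 hx
  have hxq : x ∈ superlevelHull μ f q := mem_iInter₂.2 fun p hp =>
    subset_toMeasurable _ _ ((ENNReal.ofReal_le_ofReal (by exact_mod_cast hp)).trans_lt hqf)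
  exact htq.trans_le (le_iSup_of_le q (by rw [indicator_of_mem hxq]; rfl))

lemma measurableEnvelope_superlevel_subset (t : ℝ≥0∞) :
    {x | t < measurableEnvelope μ f x} ⊆
      ⋃ q ∈ {q : ℚ | t < ENNReal.ofReal q}, superlevelHull μ f q := by
  intro x (hx : t < ⨆ q : ℚ, _)
  obtain ⟨q, hq⟩ := lt_iSup_iff.1 hx
  by_cases hxq : x ∈ superlevelHull μ f q
  · rw [indicator_of_mem hxq] at hq
    exact mem_biUnion (x := q) hq hxq
  · simp [indicator_of_notMem hxq] at hq

lemma measure_superlevelHull_inter_le [SFinite μ] {t : ℝ≥0∞} {q : ℚ} (hq : t < ENNReal.ofReal q)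
    {S : Set α} (hS : MeasurableSet S) :
    μ (superlevelHull μ f q ∩ S) ≤ μ ({x | t < f x} ∩ S) := calc
  μ (superlevelHull μ f q ∩ S) ≤ μ (toMeasurable μ {x | ENNReal.ofReal q < f x} ∩ S) :=
    measure_mono (inter_subset_inter_left S (iInter₂_subset (κ := fun p => p ≤ q) q le_rfl))
  _ = μ ({x | ENNReal.ofReal q < f x} ∩ S) := Measure.measure_toMeasurable_inter_of_sFinite hS _
  _ ≤ μ ({x | t < f x} ∩ S) := measure_mono (inter_subset_inter_left S fun _ hx => hq.trans hx)

theorem measure_superlevel_measurableEnvelope_inter [SFinite μ] (t : ℝ≥0∞) {S : Set α}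
    (hS : MeasurableSet S) :
    μ ({x | t < measurableEnvelope μ f x} ∩ S) = μ ({x | t < f x} ∩ S) := by
  refine le_antisymm ?_ (measure_mono (inter_subset_inter_left S
    (superlevel_subset_measurableEnvelope t)))
  have hdir : DirectedOn (Function.onFun (· ⊆ ·) fun q => superlevelHull μ f q ∩ S)
      {q : ℚ | t < ENNReal.ofReal q} := fun q hq q' hq' =>
    ⟨min q q', by simpa [ENNReal.ofReal_min] using ⟨hq, hq'⟩,
      inter_subset_inter_left S (antitone_superlevelHull (min_le_left q q')),
      inter_subset_inter_left S (antitone_superlevelHull (min_le_right q q'))⟩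
  calc μ ({x | t < measurableEnvelope μ f x} ∩ S)
      ≤ μ (⋃ q ∈ {q : ℚ | t < ENNReal.ofReal q}, superlevelHull μ f q ∩ S) := by
        rw [← iUnion₂_inter]
        exact measure_mono (inter_subset_inter_left S (measurableEnvelope_superlevel_subset t))
    _ = ⨆ q ∈ {q : ℚ | t < ENNReal.ofReal q}, μ (superlevelHull μ f q ∩ S) :=
        measure_biUnion_eq_iSup (Set.to_countable _) hdir
    _ ≤ μ ({x | t < f x} ∩ S) := iSup₂_le fun q hq => measure_superlevelHull_inter_le hq hS

end Envelope

section Differentiation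

variable {E : Type*} [NormedAddCommGroup E] [NormedSpace ℝ E] [FiniteDimensional ℝ E]
  [MeasurableSpace E] [BorelSpace E] (μ : Measure E) [μ.IsAddHaarMeasure]

lemma ball_ae_eq_closedBall [Nontrivial E] (x : E) (r : ℝ) : ball x r =ᵐ[μ] closedBall x r := by
  rw [ae_eq_set, sdiff_eq_empty.2 ball_subset_closedBall, closedBall_sdiff_ball,
    Measure.addHaar_sphere, measure_empty]
  exact ⟨rfl, rfl⟩

theorem ae_tendsto_setLIntegral_ball_div [Nontrivial E] {g : E → ℝ≥0∞} (hg : Measurable g)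
    (hloc : ∀ x, ∃ r > 0, ∫⁻ y in ball x r, g y ∂μ ≠ ∞) :
    ∀ᵐ x ∂μ, Tendsto (fun r => (∫⁻ y in ball x r, g y ∂μ) / μ (ball x r)) (𝓝[>] 0) (𝓝 (g x)) := by
  have : IsLocallyFiniteMeasure (μ.withDensity g) := ⟨fun x => by
    obtain ⟨r, hr, hfin⟩ := hloc x
    exact ⟨ball x r, ball_mem_nhds x hr,
      by rwa [withDensity_apply _ measurableSet_ball, lt_top_iff_ne_top]⟩⟩
  filter_upwards [Besicovitch.ae_tendsto_rnDeriv (μ.withDensity g) μ,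
    Measure.rnDeriv_withDensity μ hg] with x hx hgx
  rw [← hgx]
  refine hx.congr fun r => ?_
  rw [← withDensity_apply _ measurableSet_ball,
    measure_congr (withDensity_absolutelyContinuous μ g |>.ae_eq (ball_ae_eq_closedBall μ x r)),
    measure_congr (ball_ae_eq_closedBall μ x r)]

end Differentiation

variable {n : ℕ}

def dyadicIndex (k : ℤ) (x : En n) : Fin n → ℤ := fun i => ⌊x i / 2 ^ k⌋

lemma mem_dyadicCube_iff {k : ℤ} {m : Fin n → ℤ} {x : En n} :
    x ∈ dyadicCube n k m ↔ dyadicIndex k x = m := by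
  have h : (0 : ℝ) < 2 ^ k := zpow_pos two_pos k
  simp only [dyadicCube, mem_ofPred_eq, funext_iff, dyadicIndex, Int.floor_eq_iff,
    le_div_iff₀ h, div_lt_iff₀ h]

lemma mem_dyadicCube_dyadicIndex (k : ℤ) (x : En n) : x ∈ dyadicCube n k (dyadicIndex k x) :=
  mem_dyadicCube_iff.2 rfl

lemma dyadicIndex_add_natCast (k : ℤ) (d : ℕ) (x : En n) :
    dyadicIndex (k + d) x = fun i => dyadicIndex k x i / 2 ^ d := by
  ext i
  have := Int.floor_div_natCast (x i / 2 ^ k) (2 ^ d)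
  push_cast at this
  rw [dyadicIndex, dyadicIndex, zpow_add₀ two_ne_zero, zpow_natCast, ← div_div, this]

lemma dyadicIndex_eq_of_le {k k' : ℤ} (hk : k ≤ k') {x y : En n}
    (h : dyadicIndex k y = dyadicIndex k x) : dyadicIndex k' y = dyadicIndex k' x := by
  obtain ⟨d, rfl⟩ := Int.le.dest hk
  rw [dyadicIndex_add_natCast, dyadicIndex_add_natCast, h]

lemma exists_dyadicCube_subset {U : Set (En n)} (hU : IsOpen U) {x : En n} (hx : x ∈ U)
    (k₀ : ℤ) : ∃ k ≤ k₀, dyadicCube n k (dyadicIndex k x) ⊆ U := by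
  obtain ⟨ε, hε, hball⟩ := Metric.isOpen_iff.1 (hU.preimage (PiLp.continuous_toLp 2 _))
    (WithLp.ofLp x) (by simpa using hx)
  obtain ⟨j, hj⟩ := exists_pow_lt_of_lt_one hε (by norm_num : (2⁻¹ : ℝ) < 1)
  set k := min k₀ (-j)
  have hk : (2 : ℝ) ^ k < ε := calc
    (2 : ℝ) ^ k ≤ 2 ^ (-(j : ℤ)) := zpow_le_zpow_right₀ one_le_two (min_le_right _ _)
    _ = 2⁻¹ ^ j := by rw [zpow_neg, zpow_natCast, inv_pow]
    _ < ε := hj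
  refine ⟨k, min_le_left _ _, fun y hy => ?_⟩
  have hx' := mem_dyadicCube_dyadicIndex k x
  have hyx : dist (WithLp.ofLp y) (WithLp.ofLp x) < ε := by
    refine (dist_pi_lt_iff hε).2 fun i => ?_
    obtain ⟨hy₁, hy₂⟩ := hy i
    obtain ⟨hx₁, hx₂⟩ := hx' i
    rw [add_mul, one_mul] at hy₂ hx₂
    rw [Real.dist_eq, abs_sub_lt_iff]
    constructor <;> linarith
  simpa using hball hyx

lemma dyadicCube_eq_preimage (k : ℤ) (m : Fin n → ℤ) :
    dyadicCube n k m =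
      WithLp.ofLp ⁻¹' univ.pi fun i => Ico ((m i : ℝ) * 2 ^ k) ((m i + 1) * 2 ^ k) := by
  ext x
  simp [dyadicCube]

lemma measurableSet_dyadicCube (k : ℤ) (m : Fin n → ℤ) : MeasurableSet (dyadicCube n k m) := by
  rw [dyadicCube_eq_preimage]
  exact (MeasurableSet.univ_pi fun _ => measurableSet_Ico).preimage (WithLp.measurable_ofLp _ _)

lemma volume_dyadicCube (k : ℤ) (m : Fin n → ℤ) :
    volume (dyadicCube n k m) = ENNReal.ofReal (((2 : ℝ) ^ k) ^ (n : ℝ)) := by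
  rw [dyadicCube_eq_preimage, (PiLp.volume_preserving_ofLp (Fin n)).measure_preimage
    (MeasurableSet.univ_pi fun _ => measurableSet_Ico).nullMeasurableSet, volume_pi_pi]
  simp only [Real.volume_Ico, add_mul, one_mul, add_sub_cancel_left, Finset.prod_const,
    Finset.card_univ, Fintype.card_fin, Real.rpow_natCast]
  rw [ENNReal.ofReal_pow (zpow_pos two_pos k).le]

/-- Side lengths are capped at `1` so that maximal cubes exist even for `U = univ`. -/
def maximalDyadicCubes (U : Set (En n)) : Set (ℤ × (Fin n → ℤ)) :=
  {s | s.1 ≤ 0 ∧ dyadicCube n s.1 s.2 ⊆ U ∧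
    ∀ x ∈ dyadicCube n s.1 s.2, ∀ k, s.1 < k → k ≤ 0 → ¬ dyadicCube n k (dyadicIndex k x) ⊆ U}

lemma eq_of_mem_maximalDyadicCubes {U : Set (En n)} {s s' : ℤ × (Fin n → ℤ)}
    (hs : s ∈ maximalDyadicCubes U) (hs' : s' ∈ maximalDyadicCubes U) (hss' : s.1 ≤ s'.1)
    {x : En n} (hx : x ∈ dyadicCube n s.1 s.2) (hx' : x ∈ dyadicCube n s'.1 s'.2) : s = s' := by
  rw [mem_dyadicCube_iff] at hx hx'
  obtain hlt | heq := hss'.lt_or_eq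
  · exact absurd (hx' ▸ hs'.2.1) (hs.2.2 x (mem_dyadicCube_iff.2 hx) s'.1 hlt hs'.1)
  · exact Prod.ext heq (by rw [← hx, ← hx', heq])

lemma pairwiseDisjoint_maximalDyadicCubes (U : Set (En n)) :
    (maximalDyadicCubes U).PairwiseDisjoint fun s => dyadicCube n s.1 s.2 := by
  intro s hs s' hs' hne
  refine Set.disjoint_left.2 fun x hx hx' => hne ?_
  obtain h | h := le_total s.1 s'.1
  · exact eq_of_mem_maximalDyadicCubes hs hs' h hx hx'
  · exact (eq_of_mem_maximalDyadicCubes hs' hs h hx' hx).symm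

lemma biUnion_maximalDyadicCubes {U : Set (En n)} (hU : IsOpen U) :
    ⋃ s ∈ maximalDyadicCubes U, dyadicCube n s.1 s.2 = U := by
  refine Subset.antisymm (iUnion₂_subset fun s hs => hs.2.1) fun x hx => ?_
  obtain ⟨k, ⟨hk₀, hkU⟩, hmax⟩ := Int.exists_greatest_of_bdd
    (P := fun k => k ≤ 0 ∧ dyadicCube n k (dyadicIndex k x) ⊆ U) ⟨0, fun _ hk => hk.1⟩
    (exists_dyadicCube_subset hU hx 0)
  refine mem_biUnion (x := (k, dyadicIndex k x)) ⟨hk₀, hkU, fun y hy k' hkk' hk'₀ hk'U => ?_⟩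
    (mem_dyadicCube_dyadicIndex k x)
  rw [dyadicIndex_eq_of_le hkk'.le (mem_dyadicCube_iff.1 hy)] at hk'U
  exact (hmax k' ⟨hk'₀, hk'U⟩).not_gt hkk'

lemma volume_eq_tsum_maximalDyadicCubes {U : Set (En n)} (hU : IsOpen U) :
    volume U = ∑' s : maximalDyadicCubes U, volume (dyadicCube n s.1.1 s.1.2) := by
  conv_lhs => rw [← biUnion_maximalDyadicCubes hU]
  exact measure_biUnion (Set.to_countable _) (pairwiseDisjoint_maximalDyadicCubes U)
    fun s _ => measurableSet_dyadicCube s.1 s.2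

lemma volume_le_dyadicContent (E : Set (En n)) : volume E ≤ dyadicContent n n E := by
  refine le_iInf₂ fun c hc => ?_
  calc volume E ≤ volume (⋃ i, dyadicCube n (c i).1 (c i).2) :=
        measure_mono (hc.trans interior_subset)
    _ ≤ ∑' i, volume (dyadicCube n (c i).1 (c i).2) := measure_iUnion_le _
    _ = _ := by simp only [volume_dyadicCube]

lemma volume_dyadicCube_neg_le (hn : 1 ≤ n) (j : ℕ) (m : Fin n → ℤ) :
    volume (dyadicCube n (-j) m) ≤ 2⁻¹ ^ j := by
  have h : ENNReal.ofReal ((2 : ℝ) ^ (-(j : ℤ))) = 2⁻¹ ^ j := by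
    rw [zpow_neg, zpow_natCast, ← inv_pow, ENNReal.ofReal_pow (by norm_num),
      ENNReal.ofReal_inv_of_pos two_pos, ENNReal.ofReal_ofNat]
  rw [volume_dyadicCube, Real.rpow_natCast, ENNReal.ofReal_pow (zpow_pos two_pos _).le, h,
    ← pow_mul]
  exact pow_le_pow_right_of_le_one' (by norm_num) (Nat.le_mul_of_pos_right j hn)

/-- Padding `W` with the cubes of side `2⁻ⁱ⁻ᴺ` turns it into a sequence, as `dyadicContent`
requires, at a cost of at most `2 * 2⁻ᴺ`. -/
lemma dyadicContent_le_tsum_add (hn : 1 ≤ n) {E : Set (En n)} {W : Set (ℤ × (Fin n → ℤ))}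
    (hE : E ⊆ interior (⋃ s ∈ W, dyadicCube n s.1 s.2)) (N : ℕ) :
    dyadicContent n n E ≤ ∑' s : W, volume (dyadicCube n s.1.1 s.1.2) + 2 * 2⁻¹ ^ N := by
  classical
  have : Infinite (ℤ × (Fin n → ℤ)) := Prod.infinite_of_left
  obtain ⟨_⟩ := nonempty_denumerable (ℤ × (Fin n → ℤ))
  let e := (Denumerable.eqv (ℤ × (Fin n → ℤ))).symm
  let c : ℕ → ℤ × (Fin n → ℤ) := fun i => if e i ∈ W then e i else (-(i + N : ℕ), 0)
  have hcover : E ⊆ interior (⋃ i, dyadicCube n (c i).1 (c i).2) := by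
    refine hE.trans (interior_mono (iUnion₂_subset fun s hs => ?_))
    have hc : c (e.symm s) = s := by simp [c, hs]
    exact hc ▸ subset_iUnion (fun i => dyadicCube n (c i).1 (c i).2) (e.symm s)
  calc dyadicContent n n E ≤ ∑' i, ENNReal.ofReal (((2 : ℝ) ^ (c i).1) ^ (n : ℝ)) :=
        iInf₂_le c hcover
    _ = ∑' i, volume (dyadicCube n (c i).1 (c i).2) := by simp only [volume_dyadicCube]
    _ ≤ ∑' i, (W.indicator (fun s => volume (dyadicCube n s.1 s.2)) (e i) + 2⁻¹ ^ (i + N)) := by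
        refine ENNReal.tsum_le_tsum fun i => ?_
        by_cases hi : e i ∈ W
        · simp [c, hi]
        · simpa [c, hi] using volume_dyadicCube_neg_le hn (i + N) 0
    _ = ∑' s : W, volume (dyadicCube n s.1.1 s.1.2) + 2 * 2⁻¹ ^ N := by
        rw [ENNReal.tsum_add, e.tsum_eq (W.indicator _), ← tsum_subtype]
        simp only [pow_add, ENNReal.tsum_mul_right, ENNReal.tsum_geometric,
          ENNReal.one_sub_inv_two, inv_inv]

lemma dyadicContent_le_volume_of_isOpen (hn : 1 ≤ n) {E U : Set (En n)} (hEU : E ⊆ U)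
    (hU : IsOpen U) : dyadicContent n n E ≤ volume U := by
  have hE : E ⊆ interior (⋃ s ∈ maximalDyadicCubes U, dyadicCube n s.1 s.2) := by
    rwa [biUnion_maximalDyadicCubes hU, hU.interior_eq]
  have hlim : Tendsto (fun N : ℕ => volume U + 2 * 2⁻¹ ^ N) atTop (𝓝 (volume U)) := by
    simpa using tendsto_const_nhds.add (ENNReal.Tendsto.const_mul
      (ENNReal.tendsto_pow_atTop_nhds_zero_of_lt_one (by norm_num : (2⁻¹ : ℝ≥0∞) < 1))
      (Or.inr ENNReal.ofNat_ne_top))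
  refine ge_of_tendsto' hlim fun N => ?_
  rw [volume_eq_tsum_maximalDyadicCubes hU]
  exact dyadicContent_le_tsum_add hn hE N

theorem dyadicContent_eq_volume (hn : 1 ≤ n) (E : Set (En n)) :
    dyadicContent n n E = volume E := by
  refine le_antisymm ?_ (volume_le_dyadicContent E)
  rw [Set.measure_eq_iInf_isOpen]
  exact le_iInf₂ fun U hEU => le_iInf fun hU => dyadicContent_le_volume_of_isOpen hn hEU hU

lemma ae_iff_exists_dyadicContent_eq_zero (hn : 1 ≤ n) {p : En n → Prop} :
    (∀ᵐ x, p x) ↔ ∃ E, dyadicContent n n E = 0 ∧ ∀ x ∉ E, p x := by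
  simp only [dyadicContent_eq_volume hn]
  refine ⟨fun h => ⟨{x | ¬ p x}, ae_iff.1 h, fun x hx => not_not.1 hx⟩, ?_⟩
  rintro ⟨E, hE, hp⟩
  exact measure_mono_null (fun x hx => not_imp_comm.1 (hp x) hx) hE

section ChoquetBall

variable {f g : En n → ℝ≥0∞}

lemma choquetIntegral_eq_setLIntegral (hn : 1 ≤ n) {Ω : Set (En n)} (hΩ : MeasurableSet Ω)
    (hg : Measurable g) (hfg : ∀ t, volume ({x | t < g x} ∩ Ω) = volume ({x | t < f x} ∩ Ω)) :
    choquetIntegral n n Ω f = ∫⁻ x in Ω, g x := by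
  rw [lintegral_eq_lintegral_measure_ofReal_lt _ hg, choquetIntegral]
  refine lintegral_congr fun t => ?_
  rw [dyadicContent_eq_volume hn, Measure.restrict_apply' hΩ, hfg, inter_comm]
  rfl

lemma ballAvg_eq_setLIntegral_div (hn : 1 ≤ n) (hg : Measurable g)
    (hfg : ∀ t S, MeasurableSet S → volume ({x | t < g x} ∩ S) = volume ({x | t < f x} ∩ S))
    (x : En n) (r : ℝ) :
    ballAvg n n f x r = (∫⁻ y in ball x r, g y) / volume (ball x r) := by
  rw [ballAvg, choquetIntegral_eq_setLIntegral hn measurableSet_ball hg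
    fun t => hfg t _ measurableSet_ball, dyadicContent_eq_volume hn]

theorem limsupAvg_ae_eq (hn : 1 ≤ n) (hg : Measurable g)
    (hfg : ∀ t S, MeasurableSet S → volume ({x | t < g x} ∩ S) = volume ({x | t < f x} ∩ S))
    (hf : ∀ (x : En n) (r : ℝ), 0 < r → choquetIntegral n n (ball x r) f < ⊤) :
    limsupAvg n n f =ᵐ[volume] g := by
  have : Nonempty (Fin n) := ⟨⟨0, hn⟩⟩
  have hloc (x : En n) : ∃ r > 0, ∫⁻ y in ball x r, g y ≠ ∞ := ⟨1, one_pos, by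
    rw [← choquetIntegral_eq_setLIntegral hn measurableSet_ball hg
      fun t => hfg t _ measurableSet_ball]
    exact (hf x 1 one_pos).ne⟩
  filter_upwards [ae_tendsto_setLIntegral_ball_div volume hg hloc] with x hx
  simp only [limsupAvg, ballAvg_eq_setLIntegral_div hn hg hfg]
  exact hx.limsup_eq

end ChoquetBall

/-- a nonnegative function with finite Choquet integral over every open
ball is Lebesgue measurable if and only if it coincides `H̃^n_∞`-almost everywhere with
the limsup of its `n`-dimensional ball averages. -/
theorem lebesgue_measurable_iff_limsup_avg (n : ℕ) (hn : 1 ≤ n) (f : En n → ℝ≥0∞)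
    (hf : ∀ (x : En n) (r : ℝ), 0 < r → choquetIntegral n (n : ℝ) (ball x r) f < ⊤) :
    NullMeasurable f (volume : Measure (En n)) ↔
      ∃ E : Set (En n), dyadicContent n (n : ℝ) E = 0 ∧
        ∀ x ∉ E, f x = limsupAvg n (n : ℝ) f x := by
  rw [← ae_iff_exists_dyadicContent_eq_zero hn]
  constructor
  · intro hmeas
    have hf' := hmeas.aemeasurable
    filter_upwards [hf'.ae_eq_mk, limsupAvg_ae_eq hn hf'.measurable_mk
      (fun t S _ => measure_superlevel_inter_congr hf'.ae_eq_mk.symm t S) hf] with x h₁ h₂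
    rw [h₁, h₂]
  · intro hlim
    have henv := limsupAvg_ae_eq hn measurable_measurableEnvelope
      (fun t _ hS => measure_superlevel_measurableEnvelope_inter t hS) hf
    exact measurable_measurableEnvelope.nullMeasurable.congr (EventuallyEq.trans hlim henv).symm
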